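/- (Desargues' involution theorem for a circle through the quadrangle.) Let B, C, D, E be four pairwise distinct points lying on a circle 𝒞 of ℝ², no three of them collinear. Let Δ be a line that is not parallel to any of the six side lines BC, DE, BE, CD, BD, CE and does not pass through any point of pairwise intersection of these six lines, and suppose Δ meets the circle 𝒞 in two distinct points L and M. Let I = Δ∩BC, K = Δ∩DE, P = Δ∩BE, Q = Δ∩CD. Then QL·QM·PI·PK = PL·PM·QI·QK; that is, (L,M) and (I,K) are couples of the same involution as determined by the couple (P,Q). -/

import Mathlib

noncomputable section

open EuclideanGeometry

abbrev Pt : Type := EuclideanSpace ℝ (Fin 2)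

/-- The affine line through two points of the Euclidean plane. -/
def lineThrough (x y : Pt) : AffineSubspace ℝ Pt := affineSpan ℝ {x, y}

/-- A subset of the plane is a line if it is the affine span of two distinct points. -/
def IsLine (s : AffineSubspace ℝ Pt) : Prop := ∃ x y : Pt, x ≠ y ∧ s = lineThrough x y

/-- The six side lines of a complete quadrangle B, C, D, E. -/
def sides (B C D E : Pt) : Set (AffineSubspace ℝ Pt) :=
  {lineThrough B C, lineThrough D E, lineThrough B E,
   lineThrough C D, lineThrough B D, lineThrough C E}

/-!
The circle and the two line pairs `BC ∪ DE`, `BE ∪ CD` are conics through `B, C, D, E`, so (the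
four points being in general position) the equation of the circle is a linear combination of the
equations of the two line pairs. Parametrise `Δ` by `t ↦ A₀ + t (A₁ - A₀)`, with `L, M, I, K, P, Q`
at `l, m, i, k, p, q`. On `Δ` the circle equation becomes `‖A₁ - A₀‖² (t - l)(t - m)`, the pair
`BC ∪ DE` gives `c (t - i)(t - k)`, and the pair `BE ∪ CD` vanishes at `p` and `q`. Evaluating the
linear relation at `p` and at `q` and dividing, `(p - l)(p - m) / ((p - i)(p - k))` and
`(q - l)(q - m) / ((q - i)(q - k))` are equal. Distances along `Δ` are `|s - t| ‖A₁ - A₀‖`.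
-/

open AffineMap

def cross (u v : Pt) : ℝ := u 0 * v 1 - u 1 * v 0

lemma norm_sq_eq_coord (u : Pt) : ‖u‖ ^ 2 = u 0 ^ 2 + u 1 ^ 2 := by
  simp [EuclideanSpace.real_norm_sq_eq, Fin.sum_univ_two]

lemma dist_sq_eq_coord (X Y : Pt) : dist X Y ^ 2 = (X 0 - Y 0) ^ 2 + (X 1 - Y 1) ^ 2 := by
  rw [dist_eq_norm, norm_sq_eq_coord, PiLp.sub_apply, PiLp.sub_apply]

lemma lineMap_apply_coord (a b : Pt) (t : ℝ) (j : Fin 2) :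
    lineMap a b t j = a j + t * (b j - a j) := by
  simp only [lineMap_apply_module', PiLp.add_apply, PiLp.smul_apply, PiLp.sub_apply, smul_eq_mul]
  ring

lemma cross_sub_eq_zero_of_mem_lineThrough {A B X : Pt} (h : X ∈ lineThrough A B) :
    cross (B - A) (X - A) = 0 := by
  obtain ⟨t, rfl⟩ := mem_affineSpan_pair_iff_exists_lineMap_eq.mp h
  simp only [cross, PiLp.sub_apply, lineMap_apply_coord]
  ring

lemma collinear_of_cross_eq_zero {A B C : Pt} (h : cross (B - A) (C - A) = 0) :
    Collinear ℝ ({A, B, C} : Set Pt) := by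
  rcases eq_or_ne A B with rfl | hAB
  · simpa using collinear_pair ℝ A C
  have hN : (B 0 - A 0) ^ 2 + (B 1 - A 1) ^ 2 ≠ 0 := by
    simpa [norm_sq_eq_coord] using
      pow_ne_zero 2 (norm_ne_zero_iff.mpr (sub_ne_zero.mpr hAB.symm))
  have hC : C ∈ line[ℝ, A, B] := by
    refine mem_affineSpan_pair_iff_exists_lineMap_eq.mpr
      ⟨((B 0 - A 0) * (C 0 - A 0) + (B 1 - A 1) * (C 1 - A 1)) /
        ((B 0 - A 0) ^ 2 + (B 1 - A 1) ^ 2), ?_⟩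
    simp only [cross, PiLp.sub_apply] at h
    ext j
    rw [lineMap_apply_coord, div_mul_eq_mul_div, add_div' _ _ _ hN, div_eq_iff hN]
    fin_cases j <;> simp only [Fin.zero_eta, Fin.mk_one]
    · linear_combination (B 1 - A 1) * h
    · linear_combination (A 0 - B 0) * h
  have := collinear_insert_of_mem_affineSpan_pair hC
  rwa [Set.insert_comm, Set.pair_comm] at this

/-- `det [[‖X - B‖², X - B], [‖C - B‖², C - B], [‖D - B‖², D - B]]`, whose zero set is the circle
through `B, C, D`. -/
def circleForm (B C D X : Pt) : ℝ :=
  cross (C - B) (D - B) * ‖X - B‖ ^ 2 - ‖C - B‖ ^ 2 * cross (X - B) (D - B)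
    - ‖D - B‖ ^ 2 * cross (C - B) (X - B)

lemma cross_mul_dist_sq_sub_sq_eq_circleForm {O B C D : Pt} {r : ℝ} (hB : dist B O = r)
    (hC : dist C O = r) (hD : dist D O = r) (X : Pt) :
    cross (C - B) (D - B) * (dist X O ^ 2 - r ^ 2) = circleForm B C D X := by
  rw [← hB] at hC hD ⊢
  rw [← sq_eq_sq₀ dist_nonneg dist_nonneg, dist_sq_eq_coord, dist_sq_eq_coord] at hC hD
  linear_combination (norm := skip) cross (X - B) (D - B) * hC + cross (C - B) (X - B) * hD
  simp only [circleForm, cross, dist_sq_eq_coord, norm_sq_eq_coord, PiLp.sub_apply]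
  ring

/-- The coefficients of the two line pairs are read off by restricting to the lines `BE` and `BC`,
on each of which one of the pairs vanishes. -/
lemma mul_circleForm_eq_pencil {B C D E : Pt} (hE : circleForm B C D E = 0) (X : Pt) :
    cross (C - B) (E - B) * cross (D - B) (E - B) * circleForm B C D X =
      -(‖E - B‖ ^ 2 * cross (C - B) (D - B)) * (cross (C - B) (X - B) * cross (E - D) (X - D))
      + ‖C - B‖ ^ 2 * cross (D - B) (E - B) * (cross (E - B) (X - B) * cross (D - C) (X - C)) := by
  linear_combination (norm := skip) (cross (C - B) (X - B) * cross (E - B) (X - D)) * hE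
  simp only [circleForm, cross, norm_sq_eq_coord, PiLp.sub_apply]
  ring

lemma mul_dist_sq_sub_sq_eq_pencil {O B C D E : Pt} {r : ℝ} (hB : dist B O = r)
    (hC : dist C O = r) (hD : dist D O = r) (hE : dist E O = r) (X : Pt) :
    cross (C - B) (E - B) * cross (D - B) (E - B) * cross (C - B) (D - B) *
        (dist X O ^ 2 - r ^ 2) =
      -(‖E - B‖ ^ 2 * cross (C - B) (D - B)) * (cross (C - B) (X - B) * cross (E - D) (X - D))
      + ‖C - B‖ ^ 2 * cross (D - B) (E - B) * (cross (E - B) (X - B) * cross (D - C) (X - C)) := by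
  have hE' : circleForm B C D E = 0 := by
    rw [← cross_mul_dist_sq_sub_sq_eq_circleForm hB hC hD, hE, sub_self, mul_zero]
  rw [mul_assoc, cross_mul_dist_sq_sub_sq_eq_circleForm hB hC hD, mul_circleForm_eq_pencil hE']

lemma quadratic_eq_mul_sub_mul_sub {a b c l m : ℝ} (hlm : l ≠ m) (hl : a * l ^ 2 + b * l + c = 0)
    (hm : a * m ^ 2 + b * m + c = 0) (t : ℝ) : a * t ^ 2 + b * t + c = a * ((t - l) * (t - m)) := by
  have hb : b = -(a * (l + m)) :=
    mul_left_cancel₀ (sub_ne_zero.mpr hlm) (by linear_combination hl - hm)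
  linear_combination hl + (t - l) * hb

section
variable {V P : Type*} [NormedAddCommGroup V] [InnerProductSpace ℝ V] [MetricSpace P]
  [NormedAddTorsor V P]

lemma dist_lineMap_sq (a b O : P) (t : ℝ) :
    dist (lineMap a b t) O ^ 2
      = dist a b ^ 2 * t ^ 2 + 2 * inner ℝ (b -ᵥ a) (a -ᵥ O) * t + dist a O ^ 2 := by
  rw [dist_comm a b, dist_eq_norm_vsub V, dist_eq_norm_vsub V b, dist_eq_norm_vsub V a,
    lineMap_apply, vadd_vsub_assoc, norm_add_sq_real, norm_smul, inner_smul_left,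
    Real.norm_eq_abs, mul_pow, sq_abs]
  simp only [conj_trivial]
  ring

lemma dist_lineMap_sq_sub_sq {a b O : P} {r l m : ℝ} (hl : dist (lineMap a b l) O = r)
    (hm : dist (lineMap a b m) O = r) (hlm : l ≠ m) (t : ℝ) :
    dist (lineMap a b t) O ^ 2 - r ^ 2 = dist a b ^ 2 * ((t - l) * (t - m)) := by
  have root {s : ℝ} (hs : dist (lineMap a b s) O = r) :
      dist a b ^ 2 * s ^ 2 + 2 * inner ℝ (b -ᵥ a) (a -ᵥ O) * s + (dist a O ^ 2 - r ^ 2) = 0 := by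
    rw [← hs, dist_lineMap_sq]; ring
  rw [dist_lineMap_sq, add_sub_assoc, quadratic_eq_mul_sub_mul_sub hlm (root hl) (root hm)]

end

lemma cross_lineMap_sub {u a b X : Pt} {i : ℝ} (hi : cross u (lineMap a b i - X) = 0) (t : ℝ) :
    cross u (lineMap a b t - X) = (t - i) * cross u (b - a) := by
  simp only [cross, PiLp.sub_apply, lineMap_apply_coord] at hi ⊢
  linear_combination hi

lemma mul_mul_eq_of_mul_eq {K : Type*} [Field K] {a b x y x' y' : K} (ha : a ≠ 0)
    (h : a * x = b * y) (h' : a * x' = b * y') : x' * y = x * y' :=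
  mul_left_cancel₀ ha (by linear_combination y * h' - y' * h)

theorem desargues_involution_circle_general
    (O₀ : Pt) (ρ : ℝ)
    (B C D E : Pt)
    (hB : B ∈ Metric.sphere O₀ ρ) (hC : C ∈ Metric.sphere O₀ ρ)
    (hD : D ∈ Metric.sphere O₀ ρ) (hE : E ∈ Metric.sphere O₀ ρ)
    (hBCD : ¬ Collinear ℝ ({B, C, D} : Set Pt))
    (hBCE : ¬ Collinear ℝ ({B, C, E} : Set Pt))
    (hBDE : ¬ Collinear ℝ ({B, D, E} : Set Pt))
    (Δ : AffineSubspace ℝ Pt) (hΔ : IsLine Δ)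
    (L M : Pt) (hLM : L ≠ M)
    (hL : L ∈ Δ ∧ L ∈ Metric.sphere O₀ ρ)
    (hM : M ∈ Δ ∧ M ∈ Metric.sphere O₀ ρ)
    (I K P Q : Pt)
    (hI : I ∈ Δ ∧ I ∈ lineThrough B C)
    (hK : K ∈ Δ ∧ K ∈ lineThrough D E)
    (hP : P ∈ Δ ∧ P ∈ lineThrough B E)
    (hQ : Q ∈ Δ ∧ Q ∈ lineThrough C D) :
    dist Q L * dist Q M * dist P I * dist P K
      = dist P L * dist P M * dist Q I * dist Q K := by
  obtain ⟨A₀, A₁, hA, rfl⟩ := hΔ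
  have param {X : Pt} (hX : X ∈ lineThrough A₀ A₁) : ∃ t, lineMap A₀ A₁ t = X :=
    mem_affineSpan_pair_iff_exists_lineMap_eq.mp hX
  obtain ⟨l, rfl⟩ := param hL.1
  obtain ⟨m, rfl⟩ := param hM.1
  obtain ⟨i, rfl⟩ := param hI.1
  obtain ⟨k, rfl⟩ := param hK.1
  obtain ⟨p, rfl⟩ := param hP.1
  obtain ⟨q, rfl⟩ := param hQ.1
  set γ := cross (C - B) (E - B) * cross (D - B) (E - B) * cross (C - B) (D - B)
  have hγ : γ * dist A₀ A₁ ^ 2 ≠ 0 :=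
    mul_ne_zero (mul_ne_zero (mul_ne_zero (mt collinear_of_cross_eq_zero hBCE)
      (mt collinear_of_cross_eq_zero hBDE)) (mt collinear_of_cross_eq_zero hBCD))
      (pow_ne_zero 2 (dist_ne_zero.mpr hA))
  have on_BE_or_CD {t : ℝ}
      (ht : cross (E - B) (lineMap A₀ A₁ t - B) * cross (D - C) (lineMap A₀ A₁ t - C) = 0) :
      γ * dist A₀ A₁ ^ 2 * ((t - l) * (t - m)) =
        -(‖E - B‖ ^ 2 * cross (C - B) (D - B)) *
          (cross (C - B) (A₁ - A₀) * cross (E - D) (A₁ - A₀)) * ((t - i) * (t - k)) := by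
    have h := mul_dist_sq_sub_sq_eq_pencil hB hC hD hE (lineMap A₀ A₁ t)
    rw [dist_lineMap_sq_sub_sq hL.2 hM.2 (fun h => hLM (by rw [h])),
      cross_lineMap_sub (cross_sub_eq_zero_of_mem_lineThrough hI.2),
      cross_lineMap_sub (cross_sub_eq_zero_of_mem_lineThrough hK.2), ht] at h
    linear_combination h
  have hp := on_BE_or_CD (by rw [cross_sub_eq_zero_of_mem_lineThrough hP.2, zero_mul])
  have hq := on_BE_or_CD (by rw [cross_sub_eq_zero_of_mem_lineThrough hQ.2, mul_zero])
  have key := congrArg (fun x => |x| * dist A₀ A₁ ^ 4) (mul_mul_eq_of_mul_eq hγ hp hq)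
  simp only [abs_mul] at key
  simp only [dist_lineMap_lineMap, Real.dist_eq]
  linear_combination key

/-- Desargues'"'"' involution theorem for a circle through the quadrangle. -/
theorem desargues_involution_circle
    (O₀ : Pt) (ρ : ℝ) (hρ : 0 < ρ)
    (B C D E : Pt)
    (hB : B ∈ Metric.sphere O₀ ρ) (hC : C ∈ Metric.sphere O₀ ρ)
    (hD : D ∈ Metric.sphere O₀ ρ) (hE : E ∈ Metric.sphere O₀ ρ)
    (hdist : List.Pairwise (· ≠ ·) [B, C, D, E])
    (hBCD : ¬ Collinear ℝ ({B, C, D} : Set Pt))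
    (hBCE : ¬ Collinear ℝ ({B, C, E} : Set Pt))
    (hBDE : ¬ Collinear ℝ ({B, D, E} : Set Pt))
    (hCDE : ¬ Collinear ℝ ({C, D, E} : Set Pt))
    (Δ : AffineSubspace ℝ Pt) (hΔ : IsLine Δ)
    (hnpar : ∀ s ∈ sides B C D E, ¬ AffineSubspace.Parallel Δ s)
    (havoid : ∀ s₁ ∈ sides B C D E, ∀ s₂ ∈ sides B C D E, s₁ ≠ s₂ →
      ∀ X : Pt, X ∈ s₁ → X ∈ s₂ → X ∉ Δ)
    (L M : Pt) (hLM : L ≠ M)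
    (hL : L ∈ Δ ∧ L ∈ Metric.sphere O₀ ρ)
    (hM : M ∈ Δ ∧ M ∈ Metric.sphere O₀ ρ)
    (I K P Q : Pt)
    (hI : I ∈ Δ ∧ I ∈ lineThrough B C)
    (hK : K ∈ Δ ∧ K ∈ lineThrough D E)
    (hP : P ∈ Δ ∧ P ∈ lineThrough B E)
    (hQ : Q ∈ Δ ∧ Q ∈ lineThrough C D) :
    dist Q L * dist Q M * dist P I * dist P K
      = dist P L * dist P M * dist Q I * dist Q K :=
  desargues_involution_circle_general O₀ ρ B C D E hB hC hD hE hBCD hBCE hBDE Δ hΔ L M hLM hL hM I K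
    P Q hI hK hP hQ
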